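/- Let $n_0 \in \mathbb{R}$ and $t_0 \in \mathbb{R}$, and define Owen's T function by $\mathrm{T}(h,a) = \frac{1}{2\pi}\int_0^a \frac{e^{-h^2(1+x^2)/2}}{1+x^2}\,dx$. Then $\lim_{q \to \infty} \frac{4}{\pi^2} \int_0^\infty \int_0^\infty \mathrm{T}\!\left(\frac{n_0}{\sqrt{1 + t_0^2 + q^{-1}\tilde\sigma_0^2 \lambda^2}},\, \frac{1}{\sqrt{1 + 2t_0^2 + 2q^{-1}\tilde\sigma_0^2\lambda^2}}\right) \frac{1}{1+\tilde\sigma_0^2}\cdot\frac{1}{1+\lambda^2}\, d\tilde\sigma_0\, d\lambda = \mathrm{T}\!\left(\frac{n_0}{\sqrt{1+t_0^2}},\, \frac{1}{\sqrt{1+2t_0^2}}\right)$, where the limit is taken over integers $q \to \infty$. -/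

import Mathlib

open MeasureTheory Filter

noncomputable def owenT (h a : ℝ) : ℝ :=
  (2 * Real.pi)⁻¹ * ∫ x in (0 : ℝ)..a, Real.exp (-h ^ 2 * (1 + x ^ 2) / 2) / (1 + x ^ 2)

lemma owenT_continuous : Continuous (fun p : ℝ × ℝ => owenT p.1 p.2) := by
  unfold owenT
  refine continuous_const.mul ?_
  refine intervalIntegral.continuous_parametric_intervalIntegral_of_continuous
    (f := fun (p : ℝ × ℝ) (x : ℝ) => Real.exp (-p.1 ^ 2 * (1 + x ^ 2) / 2) / (1 + x ^ 2))
    ?_ continuous_snd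
  apply Continuous.div
  · fun_prop
  · fun_prop
  · intro q
    have : (0:ℝ) < 1 + q.2 ^ 2 := by positivity
    exact ne_of_gt this

lemma owenT_abs_le (h a : ℝ) : |owenT h a| ≤ (2 * Real.pi)⁻¹ * |a| := by
  unfold owenT
  rw [abs_mul, abs_of_nonneg (by positivity : (0:ℝ) ≤ (2 * Real.pi)⁻¹)]
  apply mul_le_mul_of_nonneg_left _ (by positivity)
  have hnorm := intervalIntegral.norm_integral_le_of_norm_le_const
    (a := (0:ℝ)) (b := a) (C := 1)
    (f := fun x => Real.exp (-h ^ 2 * (1 + x ^ 2) / 2) / (1 + x ^ 2)) ?_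
  · simpa using hnorm
  · intro x _
    have hx : (0:ℝ) < 1 + x ^ 2 := by positivity
    rw [Real.norm_eq_abs, abs_div, abs_of_pos (Real.exp_pos _), abs_of_pos hx, div_le_one hx]
    calc Real.exp (-h ^ 2 * (1 + x ^ 2) / 2) ≤ 1 := by
          rw [Real.exp_le_one_iff]
          nlinarith [sq_nonneg h, sq_nonneg x, mul_nonneg (sq_nonneg h) (sq_nonneg x)]
      _ ≤ 1 + x ^ 2 := by nlinarith [sq_nonneg x]

lemma ptwise_tendsto (n₀ t₀ s l : ℝ) :
    Tendsto (fun q : ℕ =>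
        owenT (n₀ / Real.sqrt (1 + t₀ ^ 2 + ((q : ℝ))⁻¹ * s ^ 2 * l ^ 2))
          (1 / Real.sqrt (1 + 2 * t₀ ^ 2 + 2 * ((q : ℝ))⁻¹ * s ^ 2 * l ^ 2)))
      atTop
      (nhds (owenT (n₀ / Real.sqrt (1 + t₀ ^ 2)) (1 / Real.sqrt (1 + 2 * t₀ ^ 2)))) := by
  have hx : Tendsto (fun q : ℕ => ((q : ℝ))⁻¹) atTop (nhds 0) :=
    tendsto_inv_atTop_nhds_zero_nat
  have hA : ContinuousAt (fun u : ℝ => n₀ / Real.sqrt (1 + t₀ ^ 2 + u * s ^ 2 * l ^ 2)) 0 := by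
    apply ContinuousAt.div continuousAt_const
    · exact Real.continuous_sqrt.continuousAt.comp (by fun_prop)
    · have h0 : (0:ℝ) < 1 + t₀ ^ 2 + 0 * s ^ 2 * l ^ 2 := by norm_num; positivity
      exact ne_of_gt (Real.sqrt_pos.2 h0)
  have hB : ContinuousAt (fun u : ℝ =>
      1 / Real.sqrt (1 + 2 * t₀ ^ 2 + 2 * u * s ^ 2 * l ^ 2)) 0 := by
    apply ContinuousAt.div continuousAt_const
    · exact Real.continuous_sqrt.continuousAt.comp (by fun_prop)
    · have h0 : (0:ℝ) < 1 + 2 * t₀ ^ 2 + 2 * 0 * s ^ 2 * l ^ 2 := by norm_num; positivity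
      exact ne_of_gt (Real.sqrt_pos.2 h0)
  have hgc : ContinuousAt ((fun p : ℝ × ℝ => owenT p.1 p.2) ∘ (fun u : ℝ =>
      (n₀ / Real.sqrt (1 + t₀ ^ 2 + u * s ^ 2 * l ^ 2),
        1 / Real.sqrt (1 + 2 * t₀ ^ 2 + 2 * u * s ^ 2 * l ^ 2)))) 0 :=
    ContinuousAt.comp (owenT_continuous.continuousAt) (hA.prodMk hB)
  have hcomp := hgc.tendsto.comp hx
  have hfun : (((fun p : ℝ × ℝ => owenT p.1 p.2) ∘ (fun u : ℝ =>
      (n₀ / Real.sqrt (1 + t₀ ^ 2 + u * s ^ 2 * l ^ 2),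
        1 / Real.sqrt (1 + 2 * t₀ ^ 2 + 2 * u * s ^ 2 * l ^ 2)))) ∘ (fun q : ℕ => ((q : ℝ))⁻¹))
      = fun q : ℕ =>
        owenT (n₀ / Real.sqrt (1 + t₀ ^ 2 + ((q : ℝ))⁻¹ * s ^ 2 * l ^ 2))
          (1 / Real.sqrt (1 + 2 * t₀ ^ 2 + 2 * ((q : ℝ))⁻¹ * s ^ 2 * l ^ 2)) := by
    funext q
    simp only [Function.comp]
  have hval : ((fun p : ℝ × ℝ => owenT p.1 p.2) ∘ (fun u : ℝ =>
      (n₀ / Real.sqrt (1 + t₀ ^ 2 + u * s ^ 2 * l ^ 2),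
        1 / Real.sqrt (1 + 2 * t₀ ^ 2 + 2 * u * s ^ 2 * l ^ 2)))) 0
      = owenT (n₀ / Real.sqrt (1 + t₀ ^ 2)) (1 / Real.sqrt (1 + 2 * t₀ ^ 2)) := by
    simp only [Function.comp]
    norm_num
  rw [hfun, hval] at hcomp
  exact hcomp

/-- As the number of responses `q → ∞`,
`(4/π²) ∫₀^∞ ∫₀^∞ T(n₀/√(1+t₀²+q⁻¹σ₀²λ²), 1/√(1+2t₀²+2q⁻¹σ₀²λ²)) (1+σ₀²)⁻¹ (1+λ²)⁻¹ dσ₀ dλ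
  → T(n₀/√(1+t₀²), 1/√(1+2t₀²))`. -/
theorem hyperparameter_elicitation_owenT_limit (n₀ t₀ : ℝ) :
    Tendsto
      (fun q : ℕ =>
        (4 / Real.pi ^ 2) *
          ∫ l in Set.Ioi (0 : ℝ), ∫ s in Set.Ioi (0 : ℝ),
            owenT (n₀ / Real.sqrt (1 + t₀ ^ 2 + ((q : ℝ))⁻¹ * s ^ 2 * l ^ 2))
                (1 / Real.sqrt (1 + 2 * t₀ ^ 2 + 2 * ((q : ℝ))⁻¹ * s ^ 2 * l ^ 2)) *
              (1 / (1 + s ^ 2)) * (1 / (1 + l ^ 2)))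
      atTop
      (nhds (owenT (n₀ / Real.sqrt (1 + t₀ ^ 2)) (1 / Real.sqrt (1 + 2 * t₀ ^ 2)))) := by
  have hπ : (0:ℝ) < Real.pi := Real.pi_pos
  set T := owenT (n₀ / Real.sqrt (1 + t₀ ^ 2)) (1 / Real.sqrt (1 + 2 * t₀ ^ 2)) with hT
  set ν : Measure ℝ := volume.restrict (Set.Ioi (0:ℝ)) with hν
  set μ : Measure (ℝ × ℝ) := ν.prod ν with hμ
  set F : ℕ → ℝ × ℝ → ℝ := fun q p =>
    owenT (n₀ / Real.sqrt (1 + t₀ ^ 2 + ((q : ℝ))⁻¹ * p.2 ^ 2 * p.1 ^ 2))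
        (1 / Real.sqrt (1 + 2 * t₀ ^ 2 + 2 * ((q : ℝ))⁻¹ * p.2 ^ 2 * p.1 ^ 2)) *
      (1 / (1 + p.2 ^ 2)) * (1 / (1 + p.1 ^ 2)) with hF
  set D : ℝ × ℝ → ℝ := fun p =>
    (2 * Real.pi)⁻¹ * ((1 + p.1 ^ 2)⁻¹ * (1 + p.2 ^ 2)⁻¹) with hD
  have hFcont : ∀ q : ℕ, Continuous (F q) := by
    intro q
    have hOcont : Continuous (fun p : ℝ × ℝ =>
        owenT (n₀ / Real.sqrt (1 + t₀ ^ 2 + ((q : ℝ))⁻¹ * p.2 ^ 2 * p.1 ^ 2))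
          (1 / Real.sqrt (1 + 2 * t₀ ^ 2 + 2 * ((q : ℝ))⁻¹ * p.2 ^ 2 * p.1 ^ 2))) := by
      have hpair : Continuous (fun p : ℝ × ℝ =>
          (n₀ / Real.sqrt (1 + t₀ ^ 2 + ((q : ℝ))⁻¹ * p.2 ^ 2 * p.1 ^ 2),
            1 / Real.sqrt (1 + 2 * t₀ ^ 2 + 2 * ((q : ℝ))⁻¹ * p.2 ^ 2 * p.1 ^ 2))) := by
        apply Continuous.prodMk
        · apply Continuous.div continuous_const
          · exact Real.continuous_sqrt.comp (by fun_prop)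
          · intro p
            have : (0:ℝ) < 1 + t₀ ^ 2 + ((q : ℝ))⁻¹ * p.2 ^ 2 * p.1 ^ 2 := by positivity
            exact ne_of_gt (Real.sqrt_pos.2 this)
        · apply Continuous.div continuous_const
          · exact Real.continuous_sqrt.comp (by fun_prop)
          · intro p
            have : (0:ℝ) < 1 + 2 * t₀ ^ 2 + 2 * ((q : ℝ))⁻¹ * p.2 ^ 2 * p.1 ^ 2 := by positivity
            exact ne_of_gt (Real.sqrt_pos.2 this)
      have : Continuous ((fun p : ℝ × ℝ => owenT p.1 p.2) ∘ (fun p : ℝ × ℝ =>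
          (n₀ / Real.sqrt (1 + t₀ ^ 2 + ((q : ℝ))⁻¹ * p.2 ^ 2 * p.1 ^ 2),
            1 / Real.sqrt (1 + 2 * t₀ ^ 2 + 2 * ((q : ℝ))⁻¹ * p.2 ^ 2 * p.1 ^ 2)))) :=
        Continuous.comp owenT_continuous hpair
      exact this
    have hc2 : Continuous (fun p : ℝ × ℝ => 1 / (1 + p.2 ^ 2)) := by
      apply Continuous.div continuous_const (by fun_prop)
      intro p
      have : (0:ℝ) < 1 + p.2 ^ 2 := by positivity
      exact ne_of_gt this
    have hc1 : Continuous (fun p : ℝ × ℝ => 1 / (1 + p.1 ^ 2)) := by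
      apply Continuous.div continuous_const (by fun_prop)
      intro p
      have : (0:ℝ) < 1 + p.1 ^ 2 := by positivity
      exact ne_of_gt this
    exact (hOcont.mul hc2).mul hc1
  have hbound : ∀ (q : ℕ) (p : ℝ × ℝ), |F q p| ≤ D p := by
    intro q p
    have h2 : (0:ℝ) < 1 / (1 + p.2 ^ 2) := by positivity
    have h1 : (0:ℝ) < 1 / (1 + p.1 ^ 2) := by positivity
    have hO : |owenT (n₀ / Real.sqrt (1 + t₀ ^ 2 + ((q : ℝ))⁻¹ * p.2 ^ 2 * p.1 ^ 2))
        (1 / Real.sqrt (1 + 2 * t₀ ^ 2 + 2 * ((q : ℝ))⁻¹ * p.2 ^ 2 * p.1 ^ 2))| ≤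
        (2 * Real.pi)⁻¹ := by
      refine (owenT_abs_le _ _).trans ?_
      have hq : (0:ℝ) ≤ ((q : ℝ))⁻¹ := by positivity
      have harg : (1:ℝ) ≤ 1 + 2 * t₀ ^ 2 + 2 * ((q : ℝ))⁻¹ * p.2 ^ 2 * p.1 ^ 2 := by
        nlinarith [sq_nonneg t₀, sq_nonneg p.1, sq_nonneg p.2,
          mul_nonneg (mul_nonneg hq (sq_nonneg p.2)) (sq_nonneg p.1)]
      have hs1 : (1:ℝ) ≤ Real.sqrt (1 + 2 * t₀ ^ 2 + 2 * ((q : ℝ))⁻¹ * p.2 ^ 2 * p.1 ^ 2) := by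
        calc (1:ℝ) = Real.sqrt 1 := Real.sqrt_one.symm
          _ ≤ _ := Real.sqrt_le_sqrt harg
      have hs0 : (0:ℝ) < Real.sqrt (1 + 2 * t₀ ^ 2 + 2 * ((q : ℝ))⁻¹ * p.2 ^ 2 * p.1 ^ 2) :=
        lt_of_lt_of_le one_pos hs1
      have habs : |1 / Real.sqrt (1 + 2 * t₀ ^ 2 + 2 * ((q : ℝ))⁻¹ * p.2 ^ 2 * p.1 ^ 2)| ≤ 1 := by
        rw [abs_of_pos (by positivity), div_le_one hs0]
        exact hs1
      calc (2 * Real.pi)⁻¹ *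
            |1 / Real.sqrt (1 + 2 * t₀ ^ 2 + 2 * ((q : ℝ))⁻¹ * p.2 ^ 2 * p.1 ^ 2)|
          ≤ (2 * Real.pi)⁻¹ * 1 := mul_le_mul_of_nonneg_left habs (by positivity)
        _ = (2 * Real.pi)⁻¹ := mul_one _
    have hFabs : |F q p| = |owenT (n₀ / Real.sqrt (1 + t₀ ^ 2 + ((q : ℝ))⁻¹ * p.2 ^ 2 * p.1 ^ 2))
        (1 / Real.sqrt (1 + 2 * t₀ ^ 2 + 2 * ((q : ℝ))⁻¹ * p.2 ^ 2 * p.1 ^ 2))| *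
        (1 / (1 + p.2 ^ 2)) * (1 / (1 + p.1 ^ 2)) := by
      rw [hF]
      simp only
      rw [abs_mul, abs_mul, abs_of_pos h2, abs_of_pos h1]
    rw [hFabs, hD]
    calc |owenT (n₀ / Real.sqrt (1 + t₀ ^ 2 + ((q : ℝ))⁻¹ * p.2 ^ 2 * p.1 ^ 2))
          (1 / Real.sqrt (1 + 2 * t₀ ^ 2 + 2 * ((q : ℝ))⁻¹ * p.2 ^ 2 * p.1 ^ 2))| *
          (1 / (1 + p.2 ^ 2)) * (1 / (1 + p.1 ^ 2))
        ≤ (2 * Real.pi)⁻¹ * (1 / (1 + p.2 ^ 2)) * (1 / (1 + p.1 ^ 2)) :=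
          mul_le_mul_of_nonneg_right (mul_le_mul_of_nonneg_right hO h2.le) h1.le
      _ = (2 * Real.pi)⁻¹ * ((1 + p.1 ^ 2)⁻¹ * (1 + p.2 ^ 2)⁻¹) := by
          rw [one_div, one_div]; ring
  have hνint : Integrable (fun x : ℝ => (1 + x ^ 2)⁻¹) ν :=
    integrable_inv_one_add_sq.restrict
  have hDint : Integrable D μ := (hνint.mul_prod hνint).const_mul _
  have hFint : ∀ q : ℕ, Integrable (F q) μ := by
    intro q
    refine Integrable.mono' hDint ((hFcont q).aestronglyMeasurable) ?_
    exact Eventually.of_forall fun p => by rw [Real.norm_eq_abs]; exact hbound q p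
  have hiter : ∀ q : ℕ,
      (∫ l in Set.Ioi (0:ℝ), ∫ s in Set.Ioi (0:ℝ),
        owenT (n₀ / Real.sqrt (1 + t₀ ^ 2 + ((q : ℝ))⁻¹ * s ^ 2 * l ^ 2))
            (1 / Real.sqrt (1 + 2 * t₀ ^ 2 + 2 * ((q : ℝ))⁻¹ * s ^ 2 * l ^ 2)) *
          (1 / (1 + s ^ 2)) * (1 / (1 + l ^ 2))) = ∫ p, F q p ∂μ := by
    intro q
    have h := MeasureTheory.integral_integral (μ := ν) (ν := ν)
      (f := fun l s =>
        owenT (n₀ / Real.sqrt (1 + t₀ ^ 2 + ((q : ℝ))⁻¹ * s ^ 2 * l ^ 2))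
            (1 / Real.sqrt (1 + 2 * t₀ ^ 2 + 2 * ((q : ℝ))⁻¹ * s ^ 2 * l ^ 2)) *
          (1 / (1 + s ^ 2)) * (1 / (1 + l ^ 2))) (hFint q)
    rw [hμ, hν]
    exact h
  set f : ℝ × ℝ → ℝ := fun p => T * (1 / (1 + p.2 ^ 2)) * (1 / (1 + p.1 ^ 2)) with hf
  have hlim : ∀ p : ℝ × ℝ, Tendsto (fun q : ℕ => F q p) atTop (nhds (f p)) := by
    intro p
    exact ((ptwise_tendsto n₀ t₀ p.2 p.1).mul_const _).mul_const _
  have hmain : Tendsto (fun q : ℕ => ∫ p, F q p ∂μ) atTop (nhds (∫ p, f p ∂μ)) := by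
    refine tendsto_integral_filter_of_dominated_convergence D
      (Eventually.of_forall fun q => (hFcont q).aestronglyMeasurable)
      (Eventually.of_forall fun q => Eventually.of_forall fun p => by
        rw [Real.norm_eq_abs]; exact hbound q p)
      hDint
      (Eventually.of_forall fun p => hlim p)
  have hI : (∫ s in Set.Ioi (0:ℝ), (1 + s ^ 2)⁻¹) = Real.pi / 2 := by
    rw [integral_Ioi_inv_one_add_sq]
    simp
  have hfint : (∫ p, f p ∂μ) = T * (Real.pi / 2) * (Real.pi / 2) := by
    have h1 : (∫ p : ℝ × ℝ, (fun l => T * (1 + l ^ 2)⁻¹) p.1 * (fun s => (1 + s ^ 2)⁻¹) p.2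
        ∂(ν.prod ν)) = (∫ l, T * (1 + l ^ 2)⁻¹ ∂ν) * (∫ s, (1 + s ^ 2)⁻¹ ∂ν) :=
      MeasureTheory.integral_prod_mul (f := fun l : ℝ => T * (1 + l ^ 2)⁻¹)
        (g := fun s : ℝ => (1 + s ^ 2)⁻¹)
    have h2 : (∫ p, f p ∂μ) = ∫ p : ℝ × ℝ,
        (fun l => T * (1 + l ^ 2)⁻¹) p.1 * (fun s => (1 + s ^ 2)⁻¹) p.2 ∂(ν.prod ν) := by
      rw [hμ]
      apply integral_congr_ae
      refine Eventually.of_forall fun p => ?_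
      simp only [hf, one_div]
      ring
    rw [h2, h1, MeasureTheory.integral_const_mul, hν, hI]
  have hfin := hmain.const_mul (4 / Real.pi ^ 2)
  rw [hfint] at hfin
  have hval : (4 / Real.pi ^ 2) * (T * (Real.pi / 2) * (Real.pi / 2)) = T := by
    field_simp
    ring
  rw [hval] at hfin
  have hfun2 : (fun q : ℕ =>
      (4 / Real.pi ^ 2) *
        ∫ l in Set.Ioi (0 : ℝ), ∫ s in Set.Ioi (0 : ℝ),
          owenT (n₀ / Real.sqrt (1 + t₀ ^ 2 + ((q : ℝ))⁻¹ * s ^ 2 * l ^ 2))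
              (1 / Real.sqrt (1 + 2 * t₀ ^ 2 + 2 * ((q : ℝ))⁻¹ * s ^ 2 * l ^ 2)) *
            (1 / (1 + s ^ 2)) * (1 / (1 + l ^ 2)))
      = fun q : ℕ => (4 / Real.pi ^ 2) * ∫ p, F q p ∂μ := by
    funext q
    rw [hiter q]
  rw [hfun2]
  exact hfin
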